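/- For any nonempty Cayley permutation ρ with m := mdd(ρ) and any inversion sequence α of length m, the concatenation α·ρ is a ρ-minimal inversion sequence. Consequently, the number of ρ-minimal inversion sequences is at least m! (the number of inversion sequences of length m). -/

import Mathlib

/-- `σ` is an inversion sequence: `σ_i ∈ {0,…,i-1}` (0-indexed: `σ[i] ≤ i`). -/
def IsInvSeq (σ : List ℕ) : Prop := ∀ i < σ.length, σ.getD i 0 ≤ i

/-- `σ` is a Cayley permutation: its value set is `{0,…,max σ}` (downward closed). -/
def IsCayley (σ : List ℕ) : Prop := ∀ v w : ℕ, w ∈ σ → v ≤ w → v ∈ σ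

/-- Maximum diagonal difference `max_i (σ_i - i + 1)` (0-indexed: `max_i (σ[i] - i)`). -/
def mdd (σ : List ℕ) : ℤ :=
  ((List.range σ.length).map (fun i => (σ.getD i 0 : ℤ) - i)).foldr max (-(σ.length : ℤ))

/-- `τ` and `σ` are order-isomorphic sequences of the same length. -/
def OrdIso (τ σ : List ℕ) : Prop :=
  τ.length = σ.length ∧ ∀ i j : ℕ, i < τ.length → j < τ.length →
    (τ.getD i 0 ≤ τ.getD j 0 ↔ σ.getD i 0 ≤ σ.getD j 0)

/-- `σ` contains the pattern `ρ` (i.e. `ρ ⪯ σ`): some subsequence of `σ` is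
order-isomorphic to `ρ`. -/
def ContainsPat (σ ρ : List ℕ) : Prop := ∃ τ : List ℕ, τ.Sublist σ ∧ OrdIso ρ τ

/-- The reduction of `σ`: the `j`-th smallest distinct value is replaced by `j-1`. -/
def red (σ : List ℕ) : List ℕ :=
  σ.map (fun v => (σ.toFinset.filter (fun w => w < v)).card)

/-- Number of distinct values of `σ`. -/
def distv (σ : List ℕ) : ℕ := σ.toFinset.card

/-- Positions (0-indexed) of saturated entries of `σ`. -/
def Sat (σ : List ℕ) : Set ℕ := {i | i < σ.length ∧ (σ.getD i 0 : ℤ) - i = mdd σ}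

/-- `σ` is a ρ-minimal inversion sequence: a minimal element, under pattern
containment, of the set of inversion sequences that are Cayley permutations and
contain `ρ`. -/
def IsMinimalFor (ρ σ : List ℕ) : Prop :=
  IsInvSeq σ ∧ IsCayley σ ∧ ContainsPat σ ρ ∧
  ∀ τ : List ℕ, IsInvSeq τ → IsCayley τ → ContainsPat τ ρ → ContainsPat σ τ → τ = σ


/-!
Let `m = mdd ρ`, attained at position `j`, so `ρ_j = j + m`. If an inversion sequence `τ`
contains the Cayley permutation `ρ`, the entry of `τ` playing `ρ_j` has value at least `ρ_j`,
hence sits at position at least `j + m`, and `τ` has length at least `m + |ρ|`. This is the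
length of `α ++ ρ`, so any `τ` inside `α ++ ρ` that still contains `ρ` is order-isomorphic to
all of `α ++ ρ`, and order-isomorphic Cayley permutations are equal.

For the count, the `ρ`-minimal sequences form a finite set: fix an occurrence of `ρ` in a minimal
`σ`. Deleting an entry outside it and reducing yields a smaller candidate unless some later entry
is saturated (`σ_t = t`) and the deleted value is repeated. So the entries after the last
saturated position `s` and the values occurring only once all lie in the occurrence, while all
values `0, …, s` occur; counting gives `|σ| ≤ 3 |ρ|`.
-/

namespace List

lemma le_foldr_max_of_mem {α : Type*} [LinearOrder α] {l : List α} {x : α} (b : α)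
    (hx : x ∈ l) : x ≤ l.foldr max b := by
  induction l with
  | nil => simp at hx
  | cons a t ih =>
    rcases mem_cons.1 hx with rfl | hx
    · exact le_max_left _ _
    · exact (ih hx).trans (le_max_right _ _)

lemma foldr_max_eq_or_mem {α : Type*} [LinearOrder α] (l : List α) (b : α) :
    l.foldr max b = b ∨ l.foldr max b ∈ l := by
  induction l with
  | nil => simp
  | cons a t ih =>
    rcases max_choice a (t.foldr max b) with h | h <;> rw [foldr_cons, h]
    · exact .inr mem_cons_self
    · exact ih.imp_right (mem_cons_of_mem a)

lemma getD_mem {l : List ℕ} {i : ℕ} (hi : i < l.length) : l.getD i 0 ∈ l := by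
  rw [getD_eq_getElem _ _ hi]
  exact getElem_mem hi

lemma exists_getD_eq_of_mem {l : List ℕ} {v : ℕ} (hv : v ∈ l) :
    ∃ i < l.length, l.getD i 0 = v := by
  obtain ⟨i, hi, rfl⟩ := mem_iff_getElem.1 hv
  exact ⟨i, hi, getD_eq_getElem _ _ hi⟩

lemma getD_eraseIdx (l : List ℕ) (d i : ℕ) :
    (l.eraseIdx d).getD i 0 = if i < d then l.getD i 0 else l.getD (i + 1) 0 := by
  simp only [getD_eq_getElem?_getD, getElem?_eraseIdx]
  split_ifs <;> rfl

lemma getD_not_mem_eraseIdx {l : List ℕ} {d : ℕ} (hd : d < l.length)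
    (hcount : l.count (l.getD d 0) = 1) : l.getD d 0 ∉ l.eraseIdx d := by
  have hperm := (getElem_cons_eraseIdx_perm hd).count_eq (l.getD d 0)
  rw [getD_eq_getElem _ _ hd, count_cons_self] at hperm
  rw [getD_eq_getElem _ _ hd] at hcount ⊢
  exact count_eq_zero.1 (by omega)

lemma two_mul_card_toFinset_le {α : Type*} [DecidableEq α] (l : List α) :
    2 * l.toFinset.card ≤ l.length + (l.toFinset.filter (fun v => l.count v = 1)).card := by
  rw [Finset.card_filter, ← sum_toFinset_count_eq_length, ← Finset.sum_add_distrib,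
    mul_comm, ← smul_eq_mul, ← Finset.sum_const]
  refine Finset.sum_le_sum fun v hv => ?_
  have := count_pos_iff.2 (mem_toFinset.1 hv)
  split_ifs <;> omega

end List

lemma getD_sub_le_mdd (σ : List ℕ) {i : ℕ} (hi : i < σ.length) :
    (σ.getD i 0 : ℤ) - i ≤ mdd σ :=
  List.le_foldr_max_of_mem _ (List.mem_map.2 ⟨i, List.mem_range.2 hi, rfl⟩)

lemma mdd_nonneg {σ : List ℕ} (hσ : σ ≠ []) : 0 ≤ mdd σ := by
  have := getD_sub_le_mdd σ (List.length_pos_iff.2 hσ)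
  push_cast at this
  omega

lemma exists_getD_sub_eq_mdd {σ : List ℕ} (hσ : σ ≠ []) :
    ∃ i < σ.length, (σ.getD i 0 : ℤ) - i = mdd σ := by
  rcases List.foldr_max_eq_or_mem ((List.range σ.length).map fun i => (σ.getD i 0 : ℤ) - i)
    (-(σ.length : ℤ)) with h | h
  · have := mdd_nonneg hσ
    have := List.length_pos_iff.2 hσ
    rw [mdd, h] at *
    omega
  · simpa [mdd] using h

lemma IsInvSeq.lt_length_of_mem {σ : List ℕ} (hσ : IsInvSeq σ) {v : ℕ} (hv : v ∈ σ) :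
    v < σ.length := by
  obtain ⟨i, hi, rfl⟩ := List.exists_getD_eq_of_mem hv
  exact (hσ i hi).trans_lt hi

structure IsOccurrence (ρ σ : List ℕ) (e : ℕ → ℕ) : Prop where
  strictMonoOn : StrictMonoOn e (Set.Iio ρ.length)
  lt_length : ∀ j < ρ.length, e j < σ.length
  le_iff_le : ∀ i < ρ.length, ∀ j < ρ.length,
    (ρ.getD i 0 ≤ ρ.getD j 0 ↔ σ.getD (e i) 0 ≤ σ.getD (e j) 0)

lemma containsPat_iff_exists_isOccurrence {σ ρ : List ℕ} :
    ContainsPat σ ρ ↔ ∃ e, IsOccurrence ρ σ e := by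
  constructor
  · rintro ⟨τ, hsub, hlen, hiso⟩
    obtain ⟨f, hf⟩ := List.sublist_iff_exists_orderEmbedding_getElem?_eq.1 hsub
    have hget : ∀ j, τ.getD j 0 = σ.getD (f j) 0 := fun j => by
      simp only [List.getD_eq_getElem?_getD, hf]
    refine ⟨f, fun i _ j _ hij => f.strictMono hij, fun j hj => ?_, fun i hi j hj => ?_⟩
    · by_contra! h
      have := (hf j).trans (List.getElem?_eq_none_iff.2 h)
      rw [List.getElem?_eq_none_iff] at this
      omega
    · rw [hiso i j hi hj, hget, hget]
  · rintro ⟨e, he⟩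
    refine ⟨(List.range ρ.length).map fun j => σ.getD (e j) 0, ?_, by simp,
      fun i j hi hj => ?_⟩
    · -- beyond `ρ.length` the positions are pushed past the end of `σ`
      let f : ℕ → ℕ := fun j => if j < ρ.length then e j else σ.length + j
      have hf : StrictMono f := fun i j hij => by
        have := he.lt_length i
        simp only [f]
        split_ifs <;> first | omega | exact he.strictMonoOn ‹_› ‹_› hij
      refine List.sublist_iff_exists_orderEmbedding_getElem?_eq.2
        ⟨OrderEmbedding.ofStrictMono f hf, fun j => ?_⟩
      by_cases hj : j < ρ.length
      · simp [f, hj, he.lt_length j hj, List.getD_eq_getElem?_getD]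
      · simp [f, hj]
    · simpa [List.getD_eq_getElem?_getD, hi, hj] using he.le_iff_le i hi j hj

namespace IsOccurrence

variable {ρ σ : List ℕ} {e : ℕ → ℕ}

lemma add_le (he : IsOccurrence ρ σ e) {j : ℕ} :
    ∀ {d : ℕ}, j + d < ρ.length → e j + d ≤ e (j + d)
  | 0, _ => le_rfl
  | d + 1, h => by
    have := he.add_le (j := j) (d := d) (by omega)
    have := he.strictMonoOn (a := j + d) (b := j + (d + 1)) (by simp; omega) h (by omega)
    omega

lemma getD_le_getD (he : IsOccurrence ρ σ e) (hC : IsCayley ρ) {j : ℕ} (hj : j < ρ.length) :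
    ρ.getD j 0 ≤ σ.getD (e j) 0 := by
  suffices ∀ r j, j < ρ.length → ρ.getD j 0 = r → r ≤ σ.getD (e j) 0 from this _ j hj rfl
  intro r
  induction r with
  | zero => simp
  | succ r ih =>
    intro j hj hr
    obtain ⟨i, hi, hir⟩ :=
      List.exists_getD_eq_of_mem (hC r _ (List.getD_mem hj) (by omega))
    have hlt : σ.getD (e i) 0 < σ.getD (e j) 0 :=
      lt_of_not_ge fun h => by have := (he.le_iff_le j hj i hi).2 h; omega
    have := ih i hi hir
    omega

lemma of_ordIso {τ : List ℕ} (he : IsOccurrence ρ σ e) (h : OrdIso τ σ) :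
    IsOccurrence ρ τ e where
  strictMonoOn := he.strictMonoOn
  lt_length j hj := h.1 ▸ he.lt_length j hj
  le_iff_le i hi j hj := by
    rw [he.le_iff_le i hi j hj, h.2 _ _ (h.1 ▸ he.lt_length i hi) (h.1 ▸ he.lt_length j hj)]

end IsOccurrence

lemma OrdIso.symm {τ σ : List ℕ} (h : OrdIso τ σ) : OrdIso σ τ :=
  ⟨h.1.symm, fun i j hi hj => (h.2 i j (h.1 ▸ hi) (h.1 ▸ hj)).symm⟩

lemma OrdIso.isOccurrence_id {τ σ : List ℕ} (h : OrdIso τ σ) : IsOccurrence τ σ id where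
  strictMonoOn := strictMono_id.strictMonoOn _
  lt_length _ hj := h.1 ▸ hj
  le_iff_le i hi j hj := h.2 i j hi hj

lemma IsCayley.eq_of_ordIso {τ σ : List ℕ} (hτ : IsCayley τ) (hσ : IsCayley σ)
    (h : OrdIso τ σ) : τ = σ := by
  refine List.ext_getElem h.1 fun i hiτ hiσ => ?_
  have h₁ := h.isOccurrence_id.getD_le_getD hτ hiτ
  have h₂ := h.symm.isOccurrence_id.getD_le_getD hσ hiσ
  simp only [id, List.getD_eq_getElem _ _ hiτ, List.getD_eq_getElem _ _ hiσ] at h₁ h₂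
  omega

lemma isInvSeq_append {α ρ : List ℕ} (hα : IsInvSeq α) (h : mdd ρ ≤ α.length) :
    IsInvSeq (α ++ ρ) := by
  intro i hi
  rw [List.length_append] at hi
  rcases lt_or_ge i α.length with hiα | hiα
  · rw [List.getD_append _ _ _ _ hiα]
    exact hα i hiα
  · rw [List.getD_append_right _ _ _ _ hiα]
    have := getD_sub_le_mdd ρ (i := i - α.length) (by omega)
    omega

lemma isCayley_append {α ρ : List ℕ} (hα : IsInvSeq α) (hρ : ρ ≠ []) (hC : IsCayley ρ)
    (h : α.length ≤ mdd ρ) : IsCayley (α ++ ρ) := by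
  obtain ⟨j, hj, hjm⟩ := exists_getD_sub_eq_mdd hρ
  intro v w hw hvw
  refine List.mem_append_right α ?_
  rcases List.mem_append.1 hw with hw | hw
  · have := hα.lt_length_of_mem hw
    exact hC v _ (List.getD_mem hj) (by omega)
  · exact hC v w hw hvw

lemma mdd_add_length_le_length {ρ τ : List ℕ} (hρ : ρ ≠ []) (hC : IsCayley ρ)
    (hτ : IsInvSeq τ) (h : ContainsPat τ ρ) : mdd ρ + ρ.length ≤ τ.length := by
  obtain ⟨e, he⟩ := containsPat_iff_exists_isOccurrence.1 h
  obtain ⟨j, hj, hjm⟩ := exists_getD_sub_eq_mdd hρ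
  have hval := he.getD_le_getD hC hj
  have hpos := hτ (e j) (he.lt_length j hj)
  have hlast := he.add_le (j := j) (d := ρ.length - 1 - j) (by omega)
  have hend := he.lt_length (j + (ρ.length - 1 - j)) (by omega)
  omega

lemma isMinimalFor_append {α ρ : List ℕ} (hρ : ρ ≠ []) (hC : IsCayley ρ)
    (hα : IsInvSeq α) (hlen : (α.length : ℤ) = mdd ρ) : IsMinimalFor ρ (α ++ ρ) := by
  have hinv := isInvSeq_append (ρ := ρ) hα hlen.ge
  have hcay := isCayley_append hα hρ hC hlen.le
  refine ⟨hinv, hcay, ⟨ρ, List.sublist_append_right α ρ, rfl, fun _ _ _ _ => Iff.rfl⟩,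
    ?_⟩
  rintro τ hτ hτC hτρ ⟨τ', hsub, hiso⟩
  have := mdd_add_length_le_length hρ hC hτ hτρ
  have := hiso.1
  have heq : τ' = α ++ ρ := hsub.eq_of_length_le (by simp; omega)
  exact hτC.eq_of_ordIso hcay (heq ▸ hiso)

def rankIn (F : Finset ℕ) (v : ℕ) : ℕ := (F.filter (fun w => w < v)).card

section rankIn

variable {F : Finset ℕ}

lemma rankIn_le (F : Finset ℕ) (v : ℕ) : rankIn F v ≤ v := by
  simpa [rankIn] using Finset.card_le_card (t := Finset.range v) fun w hw => by simp_all

lemma rankIn_mono (F : Finset ℕ) {u v : ℕ} (h : u ≤ v) : rankIn F u ≤ rankIn F v :=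
  Finset.card_le_card fun w hw => by
    simp only [Finset.mem_filter] at hw ⊢
    exact ⟨hw.1, by omega⟩

lemma rankIn_lt_rankIn {u v : ℕ} (hu : u ∈ F) (h : u < v) : rankIn F u < rankIn F v :=
  Finset.card_lt_card ⟨fun w hw => by
      simp only [Finset.mem_filter] at hw ⊢
      exact ⟨hw.1, by omega⟩,
    fun hsub => by simpa using hsub (Finset.mem_filter.2 ⟨hu, h⟩)⟩

lemma rankIn_le_rankIn_iff {u v : ℕ} (hv : v ∈ F) : rankIn F u ≤ rankIn F v ↔ u ≤ v :=
  ⟨fun h => le_of_not_gt fun hvu => (rankIn_lt_rankIn hv hvu).not_ge h, rankIn_mono F⟩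

lemma rankIn_lt_of_not_mem {u v : ℕ} (hu : u ∉ F) (h : u < v) : rankIn F v < v := by
  have hsub : F.filter (fun w => w < v) ⊆ (Finset.range v).erase u := fun w hw => by
    simp only [Finset.mem_filter] at hw
    simp only [Finset.mem_erase, Finset.mem_range]
    exact ⟨fun hwu => hu (hwu ▸ hw.1), hw.2⟩
  have := Finset.card_le_card hsub
  rw [Finset.card_erase_of_mem (Finset.mem_range.2 h), Finset.card_range] at this
  exact lt_of_le_of_lt this (by omega)

lemma image_rankIn (F : Finset ℕ) : F.image (rankIn F) = Finset.range F.card := by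
  refine Finset.eq_of_subset_of_card_le (fun c hc => ?_) ?_
  · obtain ⟨v, hv, rfl⟩ := Finset.mem_image.1 hc
    refine Finset.mem_range.2 (Finset.card_lt_card ⟨Finset.filter_subset _ _, fun hsub => ?_⟩)
    simpa using hsub hv
  · rw [Finset.card_range, Finset.card_image_of_injOn]
    intro u hu v hv huv
    by_contra hne
    rcases Nat.lt_or_gt_of_ne hne with h | h
    · exact (rankIn_lt_rankIn hu h).ne huv
    · exact (rankIn_lt_rankIn hv h).ne' huv

end rankIn

lemma red_eq_map_rankIn (σ : List ℕ) : red σ = σ.map (rankIn σ.toFinset) := rfl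

@[simp] lemma length_red (σ : List ℕ) : (red σ).length = σ.length := List.length_map _

lemma red_getD (σ : List ℕ) (i : ℕ) :
    (red σ).getD i 0 = rankIn σ.toFinset (σ.getD i 0) := by
  simp only [red_eq_map_rankIn, List.getD_eq_getElem?_getD, List.getElem?_map]
  cases σ[i]? <;> simp [rankIn]

lemma ordIso_red (σ : List ℕ) : OrdIso (red σ) σ := by
  refine ⟨length_red σ, fun i j _ hj => ?_⟩
  rw [length_red] at hj
  rw [red_getD, red_getD, rankIn_le_rankIn_iff (List.mem_toFinset.2 (List.getD_mem hj))]

lemma isCayley_red (σ : List ℕ) : IsCayley (red σ) := by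
  intro v w hw hvw
  simp only [red_eq_map_rankIn, List.mem_map] at hw ⊢
  obtain ⟨u, hu, rfl⟩ := hw
  have : v ∈ σ.toFinset.image (rankIn σ.toFinset) := by
    rw [image_rankIn, Finset.mem_range]
    refine lt_of_le_of_lt hvw ?_
    rw [← Finset.mem_range, ← image_rankIn]
    exact Finset.mem_image_of_mem _ (List.mem_toFinset.2 hu)
  simpa using this

section eraseIdx

variable {σ : List ℕ} {d : ℕ}

lemma isInvSeq_red_eraseIdx (hσ : IsInvSeq σ) (hd : d < σ.length)
    (hH : σ.count (σ.getD d 0) = 1 ∨ ∀ t, d < t → t < σ.length → σ.getD t 0 ≠ t) :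
    IsInvSeq (red (σ.eraseIdx d)) := by
  intro i hi
  rw [length_red, List.length_eraseIdx_of_lt hd] at hi
  rw [red_getD, List.getD_eraseIdx]
  split_ifs with hid
  · exact (rankIn_le _ _).trans (hσ i (by omega))
  · rcases lt_or_eq_of_le (hσ (i + 1) (by omega)) with hlt | hsat
    · exact (rankIn_le _ _).trans (by omega)
    · -- a saturated entry after `d` forces `σ_d` to be a single value, which the deletion removes
      have hcount := hH.resolve_right fun h => h (i + 1) (by omega) (by omega) hsat
      have hσd := hσ d hd
      have := rankIn_lt_of_not_mem (v := σ.getD (i + 1) 0)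
        (mt List.mem_toFinset.1 (List.getD_not_mem_eraseIdx hd hcount)) (by omega)
      omega

lemma IsOccurrence.eraseIdx {ρ : List ℕ} {e : ℕ → ℕ} (he : IsOccurrence ρ σ e)
    (hd : d < σ.length) (hdP : ∀ j < ρ.length, e j ≠ d) :
    IsOccurrence ρ (σ.eraseIdx d) (fun j => if e j < d then e j else e j - 1) := by
  have hget : ∀ j < ρ.length,
      (σ.eraseIdx d).getD (if e j < d then e j else e j - 1) 0 = σ.getD (e j) 0 := by
    intro j hj
    have := hdP j hj
    split_ifs with h
    · rw [List.getD_eraseIdx, if_pos h]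
    · rw [List.getD_eraseIdx, if_neg (by omega), Nat.sub_add_cancel (by omega)]
  refine ⟨fun i hi j hj hij => ?_, fun j hj => ?_, fun i hi j hj => ?_⟩
  · have := he.strictMonoOn hi hj hij
    have := hdP i hi
    have := hdP j hj
    split_ifs <;> omega
  · have := he.lt_length j hj
    have := hdP j hj
    rw [List.length_eraseIdx_of_lt hd]
    split_ifs <;> omega
  · rw [hget i hi, hget j hj]
    exact he.le_iff_le i hi j hj

end eraseIdx

/-- If the entry at `d` lay outside the occurrence, deleting it and reducing would give a
smaller inversion sequence that is a Cayley permutation containing `ρ`. -/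
lemma IsMinimalFor.exists_index_eq {ρ σ : List ℕ} (hmin : IsMinimalFor ρ σ) {e : ℕ → ℕ}
    (he : IsOccurrence ρ σ e) {d : ℕ} (hd : d < σ.length)
    (hH : σ.count (σ.getD d 0) = 1 ∨ ∀ t, d < t → t < σ.length → σ.getD t 0 ≠ t) :
    ∃ j < ρ.length, e j = d := by
  by_contra! hdP
  have hred := hmin.2.2.2 (red (σ.eraseIdx d)) (isInvSeq_red_eraseIdx hmin.1 hd hH)
    (isCayley_red _)
    (containsPat_iff_exists_isOccurrence.2 ⟨_, (he.eraseIdx hd hdP).of_ordIso (ordIso_red _)⟩)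
    ⟨_, List.eraseIdx_sublist σ d, ordIso_red _⟩
  have := congrArg List.length hred
  rw [length_red, List.length_eraseIdx_of_lt hd] at this
  omega

lemma IsMinimalFor.length_le {ρ σ : List ℕ} (hρ : ρ ≠ []) (hmin : IsMinimalFor ρ σ) :
    σ.length ≤ 3 * ρ.length := by
  obtain ⟨e, he⟩ := containsPat_iff_exists_isOccurrence.1 hmin.2.2.1
  have hn : 0 < σ.length :=
    (he.lt_length 0 (List.length_pos_iff.2 hρ)).trans_le' (Nat.zero_le _)
  -- the last saturated position: every later entry can be deleted, and all values up to `s` occur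
  set s := Nat.findGreatest (fun t => σ.getD t 0 = t) (σ.length - 1)
  have hs : σ.getD s 0 = s :=
    Nat.findGreatest_spec (P := fun t => σ.getD t 0 = t) (m := 0) (Nat.zero_le _)
      (by have := hmin.1 0 hn; omega)
  have hsn : s < σ.length := (Nat.findGreatest_le _).trans_lt (by omega)
  have htail : σ.length - (s + 1) ≤ ρ.length := by
    have : Finset.Ico (s + 1) σ.length ⊆ (Finset.range ρ.length).image e := fun d hd => by
      rw [Finset.mem_Ico] at hd
      obtain ⟨j, hj, rfl⟩ := hmin.exists_index_eq he hd.2 <| .inr fun t hdt htn =>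
        Nat.findGreatest_is_greatest (P := fun t => σ.getD t 0 = t) (n := σ.length - 1)
          (by omega) (by omega)
      exact Finset.mem_image.2 ⟨j, Finset.mem_range.2 hj, rfl⟩
    simpa using (Finset.card_le_card this).trans Finset.card_image_le
  have hvalues : s + 1 ≤ σ.toFinset.card := by
    have : Finset.range (s + 1) ⊆ σ.toFinset := fun v hv => List.mem_toFinset.2 <|
      hmin.2.1 v _ (List.getD_mem hsn) (by rw [hs]; simpa [Nat.lt_succ_iff] using hv)
    simpa using Finset.card_le_card this
  have hsingle : (σ.toFinset.filter (fun v => σ.count v = 1)).card ≤ ρ.length := by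
    have : σ.toFinset.filter (fun v => σ.count v = 1) ⊆
        (Finset.range ρ.length).image (fun j => σ.getD (e j) 0) := fun v hv => by
      simp only [Finset.mem_filter, List.mem_toFinset] at hv
      obtain ⟨i, hi, rfl⟩ := List.exists_getD_eq_of_mem hv.1
      obtain ⟨j, hj, rfl⟩ := hmin.exists_index_eq he hi (.inl hv.2)
      exact Finset.mem_image.2 ⟨j, Finset.mem_range.2 hj, rfl⟩
    simpa using (Finset.card_le_card this).trans Finset.card_image_le
  have := σ.two_mul_card_toFinset_le
  omega

lemma finite_setOf_isMinimalFor {ρ : List ℕ} (hρ : ρ ≠ []) :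
    {σ | IsMinimalFor ρ σ}.Finite := by
  refine ((List.finite_length_le (Fin (3 * ρ.length)) (3 * ρ.length)).image
    (List.map Fin.val)).subset fun σ hσ => ?_
  have hlen := hσ.length_le hρ
  have hval : ∀ x ∈ σ, x < 3 * ρ.length := fun x hx =>
    (hσ.1.lt_length_of_mem hx).trans_le hlen
  exact ⟨σ.pmap (fun x hx => (⟨x, hx⟩ : Fin _)) hval, by simpa using hlen,
    by simp [List.map_pmap]⟩

lemma ncard_setOf_isInvSeq_length (M : ℕ) :
    {α : List ℕ | IsInvSeq α ∧ α.length = M}.ncard = Nat.factorial M := by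
  let eqv : {α : List ℕ | IsInvSeq α ∧ α.length = M} ≃ ((i : Fin M) → Fin (i + 1)) :=
    { toFun := fun α i =>
        ⟨α.1.getD i 0, Nat.lt_succ_of_le (α.2.1 i (by rw [α.2.2]; exact i.2))⟩
      invFun := fun f => ⟨List.ofFn fun i => (f i : ℕ), fun i hi => by
        rw [List.length_ofFn] at hi
        simpa [hi] using Nat.lt_succ_iff.1 (f ⟨i, hi⟩).2, by simp⟩
      left_inv := fun α => Subtype.ext <| List.ext_getElem (by simp [α.2.2]) fun i _ h => by
        simp [h]
      right_inv := fun f => funext fun i => Fin.ext <| by simp }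
  rw [← Nat.card_coe_set_eq, Nat.card_congr eqv, Nat.card_eq_fintype_card, Fintype.card_pi]
  simp [Fin.prod_univ_eq_prod_range (fun i => i + 1), Finset.prod_range_add_one_eq_factorial]

theorem stmt14 (ρ : List ℕ) (hρ : ρ ≠ []) (hC : IsCayley ρ) :
    (∀ α : List ℕ, IsInvSeq α → (α.length : ℤ) = mdd ρ → IsMinimalFor ρ (α ++ ρ)) ∧
    Nat.factorial (mdd ρ).toNat ≤ {σ : List ℕ | IsMinimalFor ρ σ}.ncard := by
  refine ⟨fun α hα hlen => isMinimalFor_append hρ hC hα hlen, ?_⟩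
  have hM : ((mdd ρ).toNat : ℤ) = mdd ρ := Int.toNat_of_nonneg (mdd_nonneg hρ)
  calc Nat.factorial (mdd ρ).toNat
      = {α : List ℕ | IsInvSeq α ∧ α.length = (mdd ρ).toNat}.ncard :=
        (ncard_setOf_isInvSeq_length _).symm
    _ = ((· ++ ρ) '' {α : List ℕ | IsInvSeq α ∧ α.length = (mdd ρ).toNat}).ncard :=
        (Set.ncard_image_of_injective _ (List.append_left_injective ρ)).symm
    _ ≤ {σ : List ℕ | IsMinimalFor ρ σ}.ncard := by
        refine Set.ncard_le_ncard ?_ (finite_setOf_isMinimalFor hρ)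
        rintro _ ⟨α, ⟨hα, hlen⟩, rfl⟩
        exact isMinimalFor_append hρ hC hα (by rw [hlen, hM])
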